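/- Suppose nonnegative absolutely continuous functions φ_z, φ_y : [0,∞) → [0,∞) and nonnegative absolutely continuous m_z, m_y with m_z(0) = m_y(0) = 0 satisfy, for constants μ̄ > μ > 0 and C₁ ≥ 0 and all 0 ≤ s ≤ t: (i) φ_z(t) + m_z(t) + 2μ̄ ∫ₛᵗ φ_z dτ ≤ φ_z(s) + m_z(s); (ii) φ_y'(t) ≤ −2μ φ_y(t) − m_y'(t) + (μ̄−μ)^{−1} C₁ φ_z(t) a.e. Then for all 0 ≤ s ≤ t: φ_y(t) + m_y(t) + 2μ ∫ₛᵗ φ_y dτ ≤ φ_y(s) + m_y(s) + C₁ (μ̄−μ)^{−1} (2μ̄)^{−1} (φ_z(s) + m_z(s)). Consequently, with D₁ = 1 + C₁(μ̄−μ)^{−1}(2μ̄)^{−1}, one has φ_z(t) + φ_y(t) + m_z(t) + m_y(t) ≤ (1 + D₁)(φ_z(s) + φ_y(s) + m_z(s) + m_y(s)). -/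
import Mathlib

open MeasureTheory Set intervalIntegral

/-- Cascade Lyapunov estimate coupling the observer-error energy φ_z with the
controlled-state energy φ_y. -/
theorem stmt_10 (μbar μ C₁ : ℝ) (hμ : 0 < μ) (hμμ : μ < μbar) (hC : 0 ≤ C₁)
    (φz φy mz my φy' my' : ℝ → ℝ)
    (hφz : ∀ t, 0 ≤ t → 0 ≤ φz t) (hφy : ∀ t, 0 ≤ t → 0 ≤ φy t)
    (hmz : ∀ t, 0 ≤ t → 0 ≤ mz t) (hmy : ∀ t, 0 ≤ t → 0 ≤ my t)
    (hmz0 : mz 0 = 0) (hmy0 : my 0 = 0)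
    (hφzc : Continuous φz)
    (hi : ∀ s t, 0 ≤ s → s ≤ t →
      φz t + mz t + 2 * μbar * ∫ τ in s..t, φz τ ≤ φz s + mz s)
    (hdy : ∀ t, 0 ≤ t → HasDerivAt φy (φy' t) t)
    (hdm : ∀ t, 0 ≤ t → HasDerivAt my (my' t) t)
    (hii : ∀ t, 0 ≤ t → φy' t ≤ -2 * μ * φy t - my' t + (μbar - μ)⁻¹ * C₁ * φz t) :
    ∀ s t, 0 ≤ s → s ≤ t →
      (φy t + my t + 2 * μ * ∫ τ in s..t, φy τ
        ≤ φy s + my s + C₁ * (μbar - μ)⁻¹ * (2 * μbar)⁻¹ * (φz s + mz s)) ∧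
      φz t + φy t + mz t + my t
        ≤ (1 + (1 + C₁ * (μbar - μ)⁻¹ * (2 * μbar)⁻¹))
            * (φz s + φy s + mz s + my s) := by
  intro s t hs hst
  have ht : 0 ≤ t := hs.trans hst
  set c : ℝ := (μbar - μ)⁻¹ * C₁ with hcdef
  have hμμ' : (0:ℝ) < μbar - μ := by linarith
  have hc : 0 ≤ c := mul_nonneg (inv_nonneg.2 hμμ'.le) hC
  have h2μbar : (0:ℝ) < 2 * μbar := by linarith
  -- continuity of φy, my at nonneg points
  have hφycont : ∀ x, 0 ≤ x → ContinuousAt φy x := fun x hx => (hdy x hx).continuousAt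
  -- interval integrability of φy on [s, t]
  have hIy : IntervalIntegrable φy volume s t := by
    apply ContinuousOn.intervalIntegrable
    intro u hu
    rw [uIcc_of_le hst] at hu
    exact (hφycont u (hs.trans hu.1)).continuousWithinAt
  have hIz : IntervalIntegrable φz volume s t := hφzc.intervalIntegrable s t
  -- key differential inequality, integrated via antitonicity
  set g : ℝ → ℝ := fun u => φy u + my u + 2 * μ * (∫ τ in s..u, φy τ)
      - c * ∫ τ in s..u, φz τ with hgdef
  have hgts : g t ≤ g s := by
    rcases eq_or_lt_of_le hst with h | hstlt
    · rw [h]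
    have hmem : s ∈ uIcc s t := left_mem_uIcc
    have hIyu : IntervalIntegrable φy volume s t := hIy
    have hcont : ContinuousOn g (Icc s t) := by
      have h1 : ContinuousOn (fun u => ∫ τ in s..u, φy τ) (Icc s t) := by
        have := continuousOn_primitive_interval' hIy hmem
        rwa [uIcc_of_le hst] at this
      have h2 : ContinuousOn (fun u => ∫ τ in s..u, φz τ) (Icc s t) := by
        have := continuousOn_primitive_interval' hIz hmem
        rwa [uIcc_of_le hst] at this
      have h3 : ContinuousOn φy (Icc s t) := fun u hu =>
        (hφycont u (hs.trans hu.1)).continuousWithinAt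
      have h4 : ContinuousOn my (Icc s t) := fun u hu =>
        ((hdm u (hs.trans hu.1)).continuousAt).continuousWithinAt
      exact ((h3.add h4).add (continuousOn_const.mul h1)).sub (continuousOn_const.mul h2)
    have hint : interior (Icc s t) = Ioo s t := interior_Icc
    have hderiv : ∀ x ∈ Ioo s t,
        HasDerivAt g (φy' x + my' x + 2 * μ * φy x - c * φz x) x := by
      intro x hx
      have hx0 : 0 < x := lt_of_le_of_lt hs hx.1
      have hφyIoi : ContinuousOn φy (Ioi (0:ℝ)) := fun u hu =>
        (hφycont u (le_of_lt hu)).continuousWithinAt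
      have hmeas := ContinuousOn.stronglyMeasurableAtFilter (μ := volume) isOpen_Ioi hφyIoi x hx0
      have hIyx : IntervalIntegrable φy volume s x := by
        apply ContinuousOn.intervalIntegrable
        intro u hu
        rw [uIcc_of_le hx.1.le] at hu
        exact (hφycont u (hs.trans hu.1)).continuousWithinAt
      have h1 : HasDerivAt (fun u => ∫ τ in s..u, φy τ) (φy x) x :=
        integral_hasDerivAt_right hIyx hmeas (hφycont x hx0.le)
      have h2 : HasDerivAt (fun u => ∫ τ in s..u, φz τ) (φz x) x :=
        integral_hasDerivAt_right (hφzc.intervalIntegrable s x)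
          (hφzc.stronglyMeasurableAtFilter _ _) hφzc.continuousAt
      exact (((hdy x hx0.le).add (hdm x hx0.le)).add (h1.const_mul (2*μ))).sub
        (h2.const_mul c)
    have := antitoneOn_of_deriv_nonpos (convex_Icc s t) hcont
      (fun x hx => by
        rw [hint] at hx
        exact (hderiv x hx).differentiableAt.differentiableWithinAt)
      (fun x hx => by
        rw [hint] at hx
        rw [(hderiv x hx).deriv]
        have hx0 : 0 ≤ x := hs.trans hx.1.le
        linarith [hii x hx0])
    exact this (left_mem_Icc.2 hst) (right_mem_Icc.2 hst) hst
  have hgs : g s = φy s + my s := by simp [hgdef]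
  -- bound on ∫ φz
  have hintz : (2 * μbar) * (∫ τ in s..t, φz τ) ≤ φz s + mz s := by
    have := hi s t hs hst
    nlinarith [hφz t ht, hmz t ht]
  have hintz' : (∫ τ in s..t, φz τ) ≤ (2 * μbar)⁻¹ * (φz s + mz s) := by
    have := mul_le_mul_of_nonneg_left hintz (inv_nonneg.2 h2μbar.le)
    rwa [← mul_assoc, inv_mul_cancel₀ h2μbar.ne', one_mul] at this
  have key : φy t + my t + 2 * μ * ∫ τ in s..t, φy τ
      ≤ φy s + my s + C₁ * (μbar - μ)⁻¹ * (2 * μbar)⁻¹ * (φz s + mz s) := by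
    have h1 : c * (∫ τ in s..t, φz τ) ≤ c * ((2 * μbar)⁻¹ * (φz s + mz s)) :=
      mul_le_mul_of_nonneg_left hintz' hc
    have h2 : c * ((2 * μbar)⁻¹ * (φz s + mz s))
        = C₁ * (μbar - μ)⁻¹ * (2 * μbar)⁻¹ * (φz s + mz s) := by
      rw [hcdef]; ring
    have h3 : g t ≤ φy s + my s := hgs ▸ hgts
    rw [hgdef] at h3
    simp only [] at h3
    linarith
  refine ⟨key, ?_⟩
  -- second estimate
  have hintz0 : 0 ≤ ∫ τ in s..t, φz τ :=
    intervalIntegral.integral_nonneg hst (fun u hu => hφz u (hs.trans hu.1))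
  have hinty0 : 0 ≤ ∫ τ in s..t, φy τ :=
    intervalIntegral.integral_nonneg hst (fun u hu => hφy u (hs.trans hu.1))
  have hz : φz t + mz t ≤ φz s + mz s := by
    have := hi s t hs hst
    nlinarith
  have hK : 0 ≤ C₁ * (μbar - μ)⁻¹ * (2 * μbar)⁻¹ :=
    mul_nonneg (mul_nonneg hC (inv_nonneg.2 hμμ'.le)) (inv_nonneg.2 h2μbar.le)
  nlinarith [hφz s hs, hφy s hs, hmz s hs, hmy s hs,
    mul_nonneg hK (add_nonneg (add_nonneg (hφy s hs) (hmy s hs)) (hmz s hs)),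
    mul_nonneg hK (hφy s hs), mul_nonneg hK (hmy s hs)]
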